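/- arXiv:1705.05339 — 3 statements merged into one kernel-verified Lean document; each statement's English description precedes it below -/
import Mathlib

section
/- Let d be the number of positive eigenvalues of K (so λ_d > 0 and λ_i = 0 for i > d) and let 1 ≤ r ≤ d. Then the POD modes ψ_1,…,ψ_r achieve exactly the eigenvalue tail sum as mean-square projection error: (1/M) Σ_{k=1}^{M} ‖u_k − Σ_{i=1}^{r} ⟨u_k, ψ_i⟩ ψ_i‖² = Σ_{i=r+1}^{M} λ_i. -/
/-!
For a positive eigenvalue `λ_l` one has `⟨u_k, ψ_l⟩ = √(M λ_l) (v_l)_k`, so the modes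
`ψ_1, …, ψ_r` are orthonormal and `(1/M) Σ_k ⟨u_k, ψ_l⟩² = λ_l`. By Pythagoras the error of
projecting `u_k` onto their span is `‖u_k‖² - Σ_{l ≤ r} ⟨u_k, ψ_l⟩²`, and averaging over `k`
leaves `tr K - Σ_{l ≤ r} λ_l`, where `tr K = Σ_l λ_l` because the `v_l` form an orthonormal
eigenbasis.
-/

open Matrix

theorem Orthonormal.norm_sub_sum_inner_smul_sq {E ι : Type*} [NormedAddCommGroup E]
    [InnerProductSpace ℝ E] [Fintype ι] {e : ι → E} (he : Orthonormal ℝ e) (x : E) :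
    ‖x - ∑ i, inner ℝ x (e i) • e i‖ ^ 2 = ‖x‖ ^ 2 - ∑ i, inner ℝ x (e i) ^ 2 := by
  have hx : inner ℝ x (∑ i, inner ℝ x (e i) • e i) = ∑ i, inner ℝ x (e i) ^ 2 := by
    simp only [inner_sum, real_inner_smul_right, sq]
  have hproj : ‖∑ i, inner ℝ x (e i) • e i‖ ^ 2 = ∑ i, inner ℝ x (e i) ^ 2 := by
    rw [← real_inner_self_eq_norm_sq, he.inner_sum]
    simp only [conj_trivial, sq]
  rw [norm_sub_sq_real, hx, hproj]
  ring

theorem sum_eigenvalues_eq_trace {n R : Type*} [Fintype n] [DecidableEq n] [CommRing R]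
    {A : Matrix n n R} {μ : n → R} {v : n → n → R} (heig : ∀ l, A *ᵥ v l = μ l • v l)
    (horth : ∀ l l', v l ⬝ᵥ v l' = if l = l' then 1 else 0) :
    ∑ l, μ l = A.trace := by
  set V : Matrix n n R := Matrix.of v
  have hVVt : V * Vᵀ = 1 := by
    ext l l'
    simpa [V, mul_apply, one_apply, dotProduct] using horth l l'
  have hdiag : ∀ l, μ l = (V * (A * Vᵀ)) l l := by
    intro l
    calc μ l = v l ⬝ᵥ (μ l • v l) := by simp [dotProduct_smul, horth l l]
      _ = v l ⬝ᵥ (A *ᵥ v l) := by rw [heig]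
      _ = (V * (A * Vᵀ)) l l := by simp [V, mul_apply, mulVec, dotProduct]
  calc ∑ l, μ l = (V * (A * Vᵀ)).trace := Finset.sum_congr rfl fun l _ => hdiag l
    _ = (Vᵀ * V * A).trace := by rw [← Matrix.mul_assoc, trace_mul_cycle]
    _ = A.trace := by rw [mul_eq_one_comm.mp hVVt, Matrix.one_mul]

section POD

variable {H : Type*} [NormedAddCommGroup H] [InnerProductSpace ℝ H] {M : ℕ} {u : Fin M → H}
  {K : Matrix (Fin M) (Fin M) ℝ} {lam : Fin M → ℝ} {v : Fin M → Fin M → ℝ} {ψ : Fin M → H}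

theorem trace_eq_inv_mul_sum_norm_sq
    (hK : ∀ k l : Fin M, K k l = (M : ℝ)⁻¹ * (inner ℝ (u k) (u l) : ℝ)) :
    K.trace = (M : ℝ)⁻¹ * ∑ k, ‖u k‖ ^ 2 := by
  simp only [trace, diag, hK, real_inner_self_eq_norm_sq, Finset.mul_sum]

theorem inner_snapshot_podMode
    (hK : ∀ k l : Fin M, K k l = (M : ℝ)⁻¹ * (inner ℝ (u k) (u l) : ℝ))
    (heig : ∀ l, K.mulVec (v l) = lam l • v l)
    (hψ : ∀ l, ψ l = (Real.sqrt (M * lam l))⁻¹ • ∑ i, v l i • u i)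
    (l k : Fin M) :
    inner ℝ (u k) (ψ l) = Real.sqrt (M * lam l) * v l k := by
  have hM : (M : ℝ) ≠ 0 := by exact_mod_cast k.pos.ne'
  have hgram : inner ℝ (u k) (∑ i, v l i • u i) = M * lam l * v l k := by
    have := congrFun (heig l) k
    simp only [mulVec, dotProduct, hK, Pi.smul_apply, smul_eq_mul] at this
    simp only [inner_sum, real_inner_smul_right, mul_assoc, ← this, Finset.mul_sum]
    refine Finset.sum_congr rfl fun i _ => ?_
    field_simp
  -- `x / √x = √x` holds for every real `x`, since `√x = 0` and `x / 0 = 0` when `x ≤ 0`.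
  rw [hψ, real_inner_smul_right, hgram, ← mul_assoc, ← div_eq_inv_mul, Real.div_sqrt]

theorem inner_podModes
    (hK : ∀ k l : Fin M, K k l = (M : ℝ)⁻¹ * (inner ℝ (u k) (u l) : ℝ))
    (heig : ∀ l, K.mulVec (v l) = lam l • v l)
    (horth : ∀ l l' : Fin M, dotProduct (v l) (v l') = if l = l' then 1 else 0)
    (hψ : ∀ l, ψ l = (Real.sqrt (M * lam l))⁻¹ • ∑ i, v l i • u i)
    {l : Fin M} (hl : 0 < lam l) (m : Fin M) :
    inner ℝ (ψ l) (ψ m) = if l = m then 1 else 0 := by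
  have hexpand : inner ℝ (ψ l) (ψ m)
      = (Real.sqrt (M * lam l))⁻¹ * (Real.sqrt (M * lam m) * (v l ⬝ᵥ v m)) := by
    rw [hψ l, real_inner_smul_left, sum_inner, dotProduct]
    simp only [real_inner_smul_left, inner_snapshot_podMode hK heig hψ, Finset.mul_sum]
    exact Finset.sum_congr rfl fun i _ => by ring
  rw [hexpand, horth]
  split_ifs with h
  · subst h
    have hM : (0 : ℝ) < M := by exact_mod_cast l.pos
    have : 0 < Real.sqrt (M * lam l) := Real.sqrt_pos.mpr (by positivity)
    field_simp
  · rw [mul_zero, mul_zero]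

theorem orthonormal_podModes
    (hK : ∀ k l : Fin M, K k l = (M : ℝ)⁻¹ * (inner ℝ (u k) (u l) : ℝ))
    (heig : ∀ l, K.mulVec (v l) = lam l • v l)
    (horth : ∀ l l' : Fin M, dotProduct (v l) (v l') = if l = l' then 1 else 0)
    (hψ : ∀ l, ψ l = (Real.sqrt (M * lam l))⁻¹ • ∑ i, v l i • u i)
    {s : Finset (Fin M)} (hs : ∀ i ∈ s, 0 < lam i) :
    Orthonormal ℝ (fun i : s => ψ i) := by
  rw [orthonormal_iff_ite]
  intro i j
  simp only [inner_podModes hK heig horth hψ (hs i i.2) j, Subtype.coe_inj]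

theorem inv_mul_sum_sq_inner_snapshot_podMode
    (hK : ∀ k l : Fin M, K k l = (M : ℝ)⁻¹ * (inner ℝ (u k) (u l) : ℝ))
    (heig : ∀ l, K.mulVec (v l) = lam l • v l)
    (horth : ∀ l l' : Fin M, dotProduct (v l) (v l') = if l = l' then 1 else 0)
    (hψ : ∀ l, ψ l = (Real.sqrt (M * lam l))⁻¹ • ∑ i, v l i • u i)
    {l : Fin M} (hl : 0 ≤ lam l) :
    (M : ℝ)⁻¹ * ∑ k, inner ℝ (u k) (ψ l) ^ 2 = lam l := by
  have hM : (0 : ℝ) < M := by exact_mod_cast l.pos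
  have hunit : ∑ k, v l k ^ 2 = 1 := by simpa [dotProduct, sq] using horth l l
  simp only [inner_snapshot_podMode hK heig hψ, mul_pow,
    Real.sq_sqrt (by positivity : (0 : ℝ) ≤ M * lam l), ← Finset.mul_sum, hunit]
  field_simp

end POD

theorem pod_projection_error_eq_tail_sum_general
    {H : Type*} [NormedAddCommGroup H] [InnerProductSpace ℝ H]
    (M : ℕ) (u : Fin M → H)
    (K : Matrix (Fin M) (Fin M) ℝ)
    (hK : ∀ k l : Fin M, K k l = (M : ℝ)⁻¹ * (inner ℝ (u k) (u l) : ℝ))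
    (lam : Fin M → ℝ) (v : Fin M → (Fin M → ℝ))
    (heig : ∀ l, K.mulVec (v l) = lam l • v l)
    (horth : ∀ l l' : Fin M, dotProduct (v l) (v l') = if l = l' then 1 else 0)
    (ψ : Fin M → H)
    (hψ : ∀ l, ψ l = (Real.sqrt (M * lam l))⁻¹ • ∑ i, v l i • u i)
    (d : ℕ)
    (hd : ∀ i : Fin M, (i : ℕ) < d ↔ 0 < lam i)
    (r : ℕ) (hrd : r ≤ d) :
    (M : ℝ)⁻¹ * ∑ k, ‖u k - ∑ i ∈ Finset.univ.filter fun i : Fin M => (i : ℕ) < r,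
        (inner ℝ (u k) (ψ i) : ℝ) • ψ i‖ ^ 2 =
      ∑ i ∈ Finset.univ.filter fun i : Fin M => r ≤ (i : ℕ), lam i := by
  set s := Finset.univ.filter fun i : Fin M => (i : ℕ) < r
  have hpos : ∀ i ∈ s, 0 < lam i := fun i hi =>
    (hd i).mp ((Finset.mem_filter.mp hi).2.trans_le hrd)
  have hψs : Orthonormal ℝ (fun i : s => ψ i) := orthonormal_podModes hK heig horth hψ hpos
  have hsplit : ∑ i ∈ s, lam i + ∑ i ∈ Finset.univ.filter fun i : Fin M => r ≤ (i : ℕ), lam i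
      = ∑ i, lam i := by
    simpa only [not_lt] using
      Finset.sum_filter_add_sum_filter_not Finset.univ (fun i : Fin M => (i : ℕ) < r) lam
  calc (M : ℝ)⁻¹ * ∑ k, ‖u k - ∑ i ∈ s, inner ℝ (u k) (ψ i) • ψ i‖ ^ 2
      = (M : ℝ)⁻¹ * ∑ k, ‖u k‖ ^ 2 - ∑ i ∈ s, (M : ℝ)⁻¹ * ∑ k, inner ℝ (u k) (ψ i) ^ 2 := by
        simp only [← Finset.sum_coe_sort s, hψs.norm_sub_sum_inner_smul_sq]
        rw [Finset.sum_sub_distrib, Finset.sum_comm, mul_sub, Finset.mul_sum, Finset.mul_sum]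
    _ = ∑ i, lam i - ∑ i ∈ s, lam i := by
        rw [← trace_eq_inv_mul_sum_norm_sq hK, ← sum_eigenvalues_eq_trace heig horth]
        exact congrArg _ (Finset.sum_congr rfl fun i hi =>
          inv_mul_sum_sq_inner_snapshot_podMode hK heig horth hψ (hpos i hi).le)
    _ = _ := by linarith

/-- if `d` is the number of positive eigenvalues of `K` and `1 ≤ r ≤ d`,
then the POD modes `ψ_1, …, ψ_r` achieve exactly the eigenvalue tail sum as
mean-square projection error:
`(1/M) Σ_{k=1}^M ‖u_k − Σ_{i=1}^r ⟨u_k, ψ_i⟩ ψ_i‖² = Σ_{i=r+1}^M λ_i`. -/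
theorem pod_projection_error_eq_tail_sum
    {H : Type*} [NormedAddCommGroup H] [InnerProductSpace ℝ H]
    (M : ℕ) (hM : 1 ≤ M) (u : Fin M → H)
    (K : Matrix (Fin M) (Fin M) ℝ)
    (hK : ∀ k l : Fin M, K k l = (M : ℝ)⁻¹ * (inner ℝ (u k) (u l) : ℝ))
    (lam : Fin M → ℝ) (v : Fin M → (Fin M → ℝ))
    (hlam_nonneg : ∀ i, 0 ≤ lam i)
    (hlam_sorted : ∀ i j : Fin M, i ≤ j → lam j ≤ lam i)
    (heig : ∀ l, K.mulVec (v l) = lam l • v l)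
    (horth : ∀ l l' : Fin M, dotProduct (v l) (v l') = if l = l' then 1 else 0)
    (ψ : Fin M → H)
    (hψ : ∀ l, ψ l = (Real.sqrt (M * lam l))⁻¹ • ∑ i, v l i • u i)
    (d : ℕ) (hdM : d ≤ M)
    (hd : ∀ i : Fin M, (i : ℕ) < d ↔ 0 < lam i)
    (r : ℕ) (hr : 1 ≤ r) (hrd : r ≤ d) :
    (M : ℝ)⁻¹ * ∑ k, ‖u k - ∑ i ∈ Finset.univ.filter fun i : Fin M => (i : ℕ) < r,
        (inner ℝ (u k) (ψ i) : ℝ) • ψ i‖ ^ 2 =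
      ∑ i ∈ Finset.univ.filter fun i : Fin M => r ≤ (i : ℕ), lam i :=
  pod_projection_error_eq_tail_sum_general M u K hK lam v heig horth ψ hψ d hd r hrd
end

section
/- Stability of the intermediate (pre-processed) solution: under the same hypotheses as the backward Euler stability lemma (for each n = 0, …, M−1, Step 1 holds with previous value u^n, new value w^{n+1} and forcing f^{n+1}, and Step 2 holds between w^{n+1} and u^{n+1}), one has ‖w^M‖² + 2 ν_T Δt Σ_{n=0}^{M−2} ‖(I − P) G((w^{n+1} + u^{n+1})/2)‖² + Σ_{n=0}^{M−1} [ ‖w^{n+1} − u^n‖² + ν Δt ‖G w^{n+1}‖² ] ≤ ‖u^0‖² + ν^{-1} Δt Σ_{n=0}^{M−1} F_{n+1}². -/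
open scoped BigOperators RealInnerProductSpace

/-!
Testing Step 1 with `ψ = w`, the convective term vanishes by skew-symmetry, the polarization
identity `2⟪w - u, w⟫ = ‖w‖² - ‖u‖² + ‖w - u‖²` and Young's inequality on the forcing give the
one-step energy inequality `‖w‖² + ‖w - u‖² + νΔt‖∇w‖² ≤ ‖u‖² + ν⁻¹ΔtF²`. Testing Step 2 with
`ψ = (w + u)/2` gives the exact energy identity `‖w‖² = ‖u‖² + 2ν_TΔt‖(I - P)∇((w + u)/2)‖²`,
so the post-processing only dissipates. Chaining the two along the time steps telescopes; the
last post-processing step is not needed, which is why the fluctuation sum stops at `M - 2`.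
-/

section InnerProduct

variable {X : Type*} [NormedAddCommGroup X] [InnerProductSpace ℝ X]

theorem two_mul_real_inner_sub_self (u w : X) :
    2 * ⟪w - u, w⟫ = ‖w‖ ^ 2 - ‖u‖ ^ 2 + ‖w - u‖ ^ 2 := by
  rw [norm_sub_sq_real, inner_sub_left, real_inner_self_eq_norm_sq, real_inner_comm]
  ring

theorem real_inner_sub_add_eq_norm_sq_sub_norm_sq (u w : X) :
    ⟪w - u, w + u⟫ = ‖w‖ ^ 2 - ‖u‖ ^ 2 := by
  rw [inner_sub_left, inner_add_right, inner_add_right, real_inner_self_eq_norm_sq,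
    real_inner_self_eq_norm_sq, real_inner_comm u w]
  ring

end InnerProduct

theorem two_mul_le_inv_mul_sq_add_mul_sq {a c ν : ℝ} (hν : 0 < ν) :
    2 * a * c ≤ ν⁻¹ * a ^ 2 + ν * c ^ 2 := by
  have h : 0 ≤ ν⁻¹ * (a - ν * c) ^ 2 := by positivity
  have hνν : ν⁻¹ * ν = 1 := inv_mul_cancel₀ hν.ne'
  linear_combination h + (ν * c ^ 2 - 2 * a * c) * hνν

theorem telescope_energy_le (a c D E R : ℕ → ℝ) (m : ℕ)
    (hstep : ∀ n ≤ m, a n + D n ≤ c n + R n) (hrestart : ∀ n < m, a n = c (n + 1) + E n) :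
    a m + ∑ n ∈ Finset.range m, E n + ∑ n ∈ Finset.range (m + 1), D n
      ≤ c 0 + ∑ n ∈ Finset.range (m + 1), R n := by
  induction m with
  | zero => simpa using hstep 0 le_rfl
  | succ m ih =>
    have hprev := ih (fun n hn => hstep n (by omega)) (fun n hn => hrestart n (by omega))
    have hlast := hstep (m + 1) le_rfl
    have hm := hrestart m (by omega)
    rw [Finset.sum_range_succ E, Finset.sum_range_succ D, Finset.sum_range_succ R]
    linarith

section Scheme

variable {X Y : Type*} [NormedAddCommGroup X] [InnerProductSpace ℝ X]
  [NormedAddCommGroup Y] [InnerProductSpace ℝ Y]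

def IsBackwardEulerStep (G : X →ₗ[ℝ] Y) (b : X →ₗ[ℝ] X →ₗ[ℝ] X →ₗ[ℝ] ℝ) (ν Δt : ℝ)
    (u w f : X) : Prop :=
  ∀ ψ : X, ⟪Δt⁻¹ • (w - u), ψ⟫ + b w w ψ + ν * ⟪G w, G ψ⟫ = ⟪f, ψ⟫

def IsPostProcessStep (G : X →ₗ[ℝ] Y) (P : Y →ₗ[ℝ] Y) (νT Δt : ℝ) (w u : X) : Prop :=
  ∀ ψ : X, ⟪Δt⁻¹ • (w - u), ψ⟫ =
    νT * ⟪G ((2:ℝ)⁻¹ • (w + u)) - P (G ((2:ℝ)⁻¹ • (w + u))), G ψ - P (G ψ)⟫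

theorem IsBackwardEulerStep.energy_le {G : X →ₗ[ℝ] Y} {b : X →ₗ[ℝ] X →ₗ[ℝ] X →ₗ[ℝ] ℝ}
    {ν Δt F : ℝ} {u w f : X} (h : IsBackwardEulerStep G b ν Δt u w f)
    (hb : ∀ x y : X, b x y y = 0) (hν : 0 < ν) (hΔt : 0 < Δt) (hf : |⟪f, w⟫| ≤ F * ‖G w‖) :
    ‖w‖ ^ 2 + (‖w - u‖ ^ 2 + ν * Δt * ‖G w‖ ^ 2) ≤ ‖u‖ ^ 2 + ν⁻¹ * Δt * F ^ 2 := by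
  have htest := h w
  rw [hb, real_inner_smul_left, real_inner_self_eq_norm_sq] at htest
  have henergy : ‖w‖ ^ 2 - ‖u‖ ^ 2 + ‖w - u‖ ^ 2 + 2 * ν * Δt * ‖G w‖ ^ 2 = 2 * Δt * ⟪f, w⟫ := by
    rw [← two_mul_real_inner_sub_self, ← htest]
    field_simp
    ring
  have hforcing := mul_le_mul_of_nonneg_left ((le_abs_self _).trans hf) hΔt.le
  have hyoung := mul_le_mul_of_nonneg_left
    (two_mul_le_inv_mul_sq_add_mul_sq (a := F) (c := ‖G w‖) hν) hΔt.le
  linarith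

theorem IsPostProcessStep.norm_sq_eq {G : X →ₗ[ℝ] Y} {P : Y →ₗ[ℝ] Y} {νT Δt : ℝ} {w u : X}
    (h : IsPostProcessStep G P νT Δt w u) (hΔt : Δt ≠ 0) :
    ‖w‖ ^ 2 = ‖u‖ ^ 2
      + 2 * νT * Δt * ‖G ((2:ℝ)⁻¹ • (w + u)) - P (G ((2:ℝ)⁻¹ • (w + u)))‖ ^ 2 := by
  have htest := h ((2:ℝ)⁻¹ • (w + u))
  rw [real_inner_smul_left, real_inner_smul_right, real_inner_sub_add_eq_norm_sq_sub_norm_sq,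
    real_inner_self_eq_norm_sq] at htest
  have hΔtΔt : Δt * Δt⁻¹ = 1 := mul_inv_cancel₀ hΔt
  linear_combination 2 * Δt * htest - (‖w‖ ^ 2 - ‖u‖ ^ 2) * hΔtΔt

end Scheme

theorem backwardEuler_vms_pod_intermediate_stability_general
    {X Y : Type*} [NormedAddCommGroup X] [InnerProductSpace ℝ X]
    [NormedAddCommGroup Y] [InnerProductSpace ℝ Y]
    (G : X →ₗ[ℝ] Y) (P : Y →ₗ[ℝ] Y)
    (ν νT Δt : ℝ) (hν : 0 < ν) (hΔt : 0 < Δt)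
    (b : X →ₗ[ℝ] X →ₗ[ℝ] X →ₗ[ℝ] ℝ) (hb : ∀ x y : X, b x y y = 0)
    (M : ℕ) (hM : 1 ≤ M) (f : ℕ → X) (F : ℕ → ℝ)
    (hf : ∀ n, 1 ≤ n → n ≤ M → ∀ v : X, |(inner ℝ (f n) v : ℝ)| ≤ F n * ‖G v‖)
    (u w : ℕ → X)
    (hstep1 : ∀ n < M, ∀ ψ : X,
      (inner ℝ (Δt⁻¹ • (w (n+1) - u n)) ψ : ℝ) + b (w (n+1)) (w (n+1)) ψ
        + ν * (inner ℝ (G (w (n+1))) (G ψ) : ℝ) = (inner ℝ (f (n+1)) ψ : ℝ))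
    (hstep2 : ∀ n < M, ∀ ψ : X,
      (inner ℝ (Δt⁻¹ • (w (n+1) - u (n+1))) ψ : ℝ) =
        νT * (inner ℝ (G ((2:ℝ)⁻¹ • (w (n+1) + u (n+1)))
            - P (G ((2:ℝ)⁻¹ • (w (n+1) + u (n+1)))))
          (G ψ - P (G ψ)) : ℝ)) :
    ‖w M‖ ^ 2
      + 2 * νT * Δt * ∑ n ∈ Finset.range (M - 1),
          ‖G ((2:ℝ)⁻¹ • (w (n+1) + u (n+1)))
            - P (G ((2:ℝ)⁻¹ • (w (n+1) + u (n+1))))‖ ^ 2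
      + ∑ n ∈ Finset.range M, (‖w (n+1) - u n‖ ^ 2 + ν * Δt * ‖G (w (n+1))‖ ^ 2)
      ≤ ‖u 0‖ ^ 2 + ν⁻¹ * Δt * ∑ n ∈ Finset.range M, F (n+1) ^ 2 := by
  obtain ⟨m, rfl⟩ := Nat.exists_eq_add_of_le' hM
  rw [Nat.add_sub_cancel, Finset.mul_sum, Finset.mul_sum]
  refine telescope_energy_le (fun n => ‖w (n+1)‖ ^ 2) (fun n => ‖u n‖ ^ 2)
    (fun n => ‖w (n+1) - u n‖ ^ 2 + ν * Δt * ‖G (w (n+1))‖ ^ 2)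
    (fun n => 2 * νT * Δt * ‖G ((2:ℝ)⁻¹ • (w (n+1) + u (n+1)))
      - P (G ((2:ℝ)⁻¹ • (w (n+1) + u (n+1))))‖ ^ 2)
    (fun n => ν⁻¹ * Δt * F (n+1) ^ 2) m (fun n hn => ?_) (fun n hn => ?_)
  · exact IsBackwardEulerStep.energy_le (hstep1 n (by omega)) hb hν hΔt
      (hf (n+1) (by omega) (by omega) (w (n+1)))
  · exact IsPostProcessStep.norm_sq_eq (hstep2 n (by omega)) hΔt.ne'

/-- stability of the intermediate (pre-processed) solution `w` of the
backward Euler post-processed VMS-POD scheme. -/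
theorem backwardEuler_vms_pod_intermediate_stability
    {X Y : Type*} [NormedAddCommGroup X] [InnerProductSpace ℝ X]
    [NormedAddCommGroup Y] [InnerProductSpace ℝ Y]
    (G : X →ₗ[ℝ] Y) (P : Y →ₗ[ℝ] Y)
    (ν νT Δt : ℝ) (hν : 0 < ν) (hνT : 0 < νT) (hΔt : 0 < Δt)
    (b : X →ₗ[ℝ] X →ₗ[ℝ] X →ₗ[ℝ] ℝ) (hb : ∀ x y : X, b x y y = 0)
    (M : ℕ) (hM : 1 ≤ M) (f : ℕ → X) (F : ℕ → ℝ)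
    (hF : ∀ n, 1 ≤ n → n ≤ M → 0 ≤ F n)
    (hf : ∀ n, 1 ≤ n → n ≤ M → ∀ v : X, |(inner ℝ (f n) v : ℝ)| ≤ F n * ‖G v‖)
    (u w : ℕ → X)
    (hstep1 : ∀ n < M, ∀ ψ : X,
      (inner ℝ (Δt⁻¹ • (w (n+1) - u n)) ψ : ℝ) + b (w (n+1)) (w (n+1)) ψ
        + ν * (inner ℝ (G (w (n+1))) (G ψ) : ℝ) = (inner ℝ (f (n+1)) ψ : ℝ))
    (hstep2 : ∀ n < M, ∀ ψ : X,
      (inner ℝ (Δt⁻¹ • (w (n+1) - u (n+1))) ψ : ℝ) =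
        νT * (inner ℝ (G ((2:ℝ)⁻¹ • (w (n+1) + u (n+1)))
            - P (G ((2:ℝ)⁻¹ • (w (n+1) + u (n+1)))))
          (G ψ - P (G ψ)) : ℝ)) :
    ‖w M‖ ^ 2
      + 2 * νT * Δt * ∑ n ∈ Finset.range (M - 1),
          ‖G ((2:ℝ)⁻¹ • (w (n+1) + u (n+1)))
            - P (G ((2:ℝ)⁻¹ • (w (n+1) + u (n+1))))‖ ^ 2
      + ∑ n ∈ Finset.range M, (‖w (n+1) - u n‖ ^ 2 + ν * Δt * ‖G (w (n+1))‖ ^ 2)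
      ≤ ‖u 0‖ ^ 2 + ν⁻¹ * Δt * ∑ n ∈ Finset.range M, F (n+1) ^ 2 :=
  backwardEuler_vms_pod_intermediate_stability_general G P ν νT Δt hν hΔt b hb M hM f F hf u w
    hstep1 hstep2
end

section
/- Conditional stability of the BDF2 post-processed VMS-POD scheme: assume additionally that ‖y − P y‖ ≤ ‖y‖ for all y ∈ Y (e.g., P is an orthogonal projection) and that ν_T < 4ν. Suppose sequences (u^n)_{n=0}^{M+1} and (w^n)_{n=1}^{M+1} in X satisfy w^1 = 0 and, for each n = 1, …, M, the BDF2 Step 1 relation holds with data (u^n, u^{n−1}), new value w^{n+1} and forcing f^{n+1}, and the post-processing (Step 2) relation holds between w^{n+1} and u^{n+1}. Then: ‖u^{M+1}‖² + ‖2u^{M+1} − u^M‖² + 2 ν_T Δt ‖(I − P) G((w^{M+1} + u^{M+1})/2)‖² + 2 ν Δt ‖G w^{M+1}‖² + Σ_{n=1}^{M} ‖w^{n+1} − 2u^n + u^{n−1}‖² + ((4ν − ν_T) Δt / 2) Σ_{n=1}^{M−1} ‖G w^{n+1}‖² ≤ ‖u^1‖² + ‖2u^1 − u^0‖² + (ν_T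 Δt / 2) ‖G u^1‖² + 2 ν^{-1} Δt Σ_{n=1}^{M} F_{n+1}². -/
/-!
Test Step 1 with the new value `w = wⁿ⁺¹`: the skew-symmetry of `b` kills the convection term,
and Dahlquist's G-stability identity for BDF2 turns `2 ⟪3w - 4uⁿ + uⁿ⁻¹, w⟫` into the increment
of the energy `‖v‖² + ‖2v - v_old‖²` plus the numerical dissipation `‖w - 2uⁿ + uⁿ⁻¹‖²`.
Testing Step 2 with `t (w + uⁿ⁺¹) - 2z` compares `‖t w - z‖²` with `‖t uⁿ⁺¹ - z‖²`: the
post-processing lowers the energy from `w` to `uⁿ⁺¹` up to a cross term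
`⟪(I - P)G m, (I - P)G uⁿ⟫`, `m = (w + uⁿ⁺¹)/2`, which Young's inequality bounds by the
fluctuation dissipation of `m` plus `(ν_T Δt / 2) ‖(I - P)G uⁿ‖²`. Testing Step 2 with
`w - uⁿ⁺¹` gives `‖(I - P)G uⁿ⁺¹‖ ≤ ‖(I - P)G w‖ ≤ ‖G w‖`, so this remainder is paid by the
viscous dissipation `2νΔt ‖G wⁿ‖²` of the previous step, leaving `(4ν - ν_T)Δt/2 ‖G wⁿ‖²`;
at the first step it is the initial term `(ν_T Δt / 2) ‖G u¹‖²`. Summing over the steps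
telescopes.
-/

open scoped RealInnerProductSpace

section InnerProduct

variable {E : Type*} [NormedAddCommGroup E] [InnerProductSpace ℝ E]

theorem real_inner_sub_add_eq_norm_sq_sub_norm_sq_s10 (x y : E) :
    ⟪x - y, x + y⟫ = ‖x‖ ^ 2 - ‖y‖ ^ 2 := by
  simp only [inner_sub_left, inner_add_right, real_inner_self_eq_norm_sq, real_inner_comm x y]
  ring

theorem two_mul_real_inner_bdf2_eq (a b c : E) :
    2 * ⟪(3:ℝ) • a - (4:ℝ) • b + c, a⟫ =
      ‖a‖ ^ 2 + ‖(2:ℝ) • a - b‖ ^ 2 + ‖a - (2:ℝ) • b + c‖ ^ 2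
        - ‖b‖ ^ 2 - ‖(2:ℝ) • b - c‖ ^ 2 := by
  simp only [← real_inner_self_eq_norm_sq, inner_sub_left, inner_add_left, inner_smul_left,
    inner_sub_right, inner_add_right, inner_smul_right, real_inner_comm a b, real_inner_comm a c,
    real_inner_comm b c, RCLike.conj_to_real]
  ring

end InnerProduct

section Scheme

variable {X Y : Type*} [NormedAddCommGroup X] [InnerProductSpace ℝ X]
  [NormedAddCommGroup Y] [InnerProductSpace ℝ Y]

theorem bdf2_energy_le {G : X →ₗ[ℝ] Y} {b : X →ₗ[ℝ] X →ₗ[ℝ] X →ₗ[ℝ] ℝ} {ν Δt F : ℝ}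
    {f p q w : X} (hν : 0 < ν) (hΔt : 0 < Δt) (hb : b w w w = 0)
    (hf : ⟪f, w⟫ ≤ F * ‖G w‖)
    (h : ⟪(2 * Δt)⁻¹ • ((3:ℝ) • w - (4:ℝ) • p + q), w⟫ + b w w w + ν * ⟪G w, G w⟫ = ⟪f, w⟫) :
    ‖w‖ ^ 2 + ‖(2:ℝ) • w - p‖ ^ 2 + ‖w - (2:ℝ) • p + q‖ ^ 2 + 2 * ν * Δt * ‖G w‖ ^ 2
      ≤ ‖p‖ ^ 2 + ‖(2:ℝ) • p - q‖ ^ 2 + 2 * ν⁻¹ * Δt * F ^ 2 := by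
  rw [hb, add_zero, real_inner_smul_left, real_inner_self_eq_norm_sq] at h
  have henergy : 2 * ⟪(3:ℝ) • w - (4:ℝ) • p + q, w⟫ + 4 * ν * Δt * ‖G w‖ ^ 2
      = 4 * Δt * ⟪f, w⟫ := by
    rw [← h]; field_simp; ring
  have hforce : 4 * Δt * ⟪f, w⟫ ≤ 2 * Δt * (ν * ‖G w‖ ^ 2 + ν⁻¹ * F ^ 2) :=
    calc 4 * Δt * ⟪f, w⟫ ≤ 4 * Δt * (F * ‖G w‖) := by gcongr
      _ = 2 * Δt * (2 * ‖G w‖ * F) := by ring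
      _ ≤ 2 * Δt * (ν * ‖G w‖ ^ 2 + ν⁻¹ * F ^ 2) := by gcongr; exact two_mul_le_add_mul_sq hν
  rw [two_mul_real_inner_bdf2_eq] at henergy
  linarith

/-- Step 2 of the scheme, with `A = (I - P) G` and `τ = Δt ν_T`. -/
def PostProcessRel (A : X →ₗ[ℝ] Y) (τ : ℝ) (w u : X) : Prop :=
  ∀ ψ, ⟪w - u, ψ⟫ = τ * ⟪A ((2:ℝ)⁻¹ • (w + u)), A ψ⟫

theorem PostProcessRel.of_fluctuation {G : X →ₗ[ℝ] Y} {P : Y →ₗ[ℝ] Y} {Δt νT : ℝ} {w u : X}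
    (hΔt : Δt ≠ 0)
    (h : ∀ ψ, ⟪Δt⁻¹ • (w - u), ψ⟫ = νT * ⟪G ((2:ℝ)⁻¹ • (w + u)) - P (G ((2:ℝ)⁻¹ • (w + u))),
      G ψ - P (G ψ)⟫) :
    PostProcessRel ((LinearMap.id - P) ∘ₗ G) (Δt * νT) w u := by
  intro ψ
  have h := h ψ
  rw [real_inner_smul_left, inv_mul_eq_iff_eq_mul₀ hΔt] at h
  rw [h, mul_assoc]
  rfl

namespace PostProcessRel

variable {A : X →ₗ[ℝ] Y} {τ : ℝ} {w u : X}

theorem norm_sq_smul_sub (h : PostProcessRel A τ w u) (t : ℝ) (z : X) :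
    ‖t • w - z‖ ^ 2 = ‖t • u - z‖ ^ 2
      + 2 * t * τ * (t * ‖A ((2:ℝ)⁻¹ • (w + u))‖ ^ 2 - ⟪A ((2:ℝ)⁻¹ • (w + u)), A z⟫) := by
  have hmid : A (t • (w + u) - (2:ℝ) • z) = (2 * t) • A ((2:ℝ)⁻¹ • (w + u)) - (2:ℝ) • A z := by
    rw [map_sub, map_smul, map_smul, map_smul]; module
  have hdiff := real_inner_sub_add_eq_norm_sq_sub_norm_sq_s10 (t • w - z) (t • u - z)
  rw [show t • w - z - (t • u - z) = t • (w - u) by module,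
    show t • w - z + (t • u - z) = t • (w + u) - (2:ℝ) • z by module,
    real_inner_smul_left, h, hmid, inner_sub_right, real_inner_smul_right,
    real_inner_smul_right, real_inner_self_eq_norm_sq] at hdiff
  linarith

theorem energy_le (h : PostProcessRel A τ w u) (hτ : 0 ≤ τ) (p : X) :
    ‖u‖ ^ 2 + ‖(2:ℝ) • u - p‖ ^ 2 + 2 * τ * ‖A ((2:ℝ)⁻¹ • (w + u))‖ ^ 2
      ≤ ‖w‖ ^ 2 + ‖(2:ℝ) • w - p‖ ^ 2 + τ / 2 * ‖A p‖ ^ 2 := by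
  have h₁ := h.norm_sq_smul_sub 1 0
  have h₂ := h.norm_sq_smul_sub 2 p
  simp only [one_smul, sub_zero, map_zero, inner_zero_right] at h₁
  set m := A ((2:ℝ)⁻¹ • (w + u))
  -- Young: `4 ⟪m, A p⟫ ≤ 8 ‖m‖² + ‖A p‖² / 2`
  have hcs : ⟪m, A p⟫ ≤ ‖m‖ * ‖A p‖ := real_inner_le_norm _ _
  nlinarith [mul_nonneg hτ (sq_nonneg (4 * ‖m‖ - ‖A p‖))]

theorem norm_sq_le (h : PostProcessRel A τ w u) (hτ : 0 < τ) : ‖A u‖ ^ 2 ≤ ‖A w‖ ^ 2 := by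
  have hdiff := real_inner_sub_add_eq_norm_sq_sub_norm_sq_s10 (A w) (A u)
  have key := h (w - u)
  rw [← map_sub, ← map_add, real_inner_comm] at hdiff
  rw [real_inner_self_eq_norm_sq, map_smul, real_inner_smul_left] at key
  nlinarith [sq_nonneg ‖w - u‖]

end PostProcessRel

theorem bdf2_postProcess_energy_le {G A : X →ₗ[ℝ] Y} {b : X →ₗ[ℝ] X →ₗ[ℝ] X →ₗ[ℝ] ℝ}
    {ν Δt τ F : ℝ} {f p q w u : X} (hν : 0 < ν) (hΔt : 0 < Δt) (hτ : 0 ≤ τ)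
    (hb : b w w w = 0) (hf : ⟪f, w⟫ ≤ F * ‖G w‖)
    (h₁ : ⟪(2 * Δt)⁻¹ • ((3:ℝ) • w - (4:ℝ) • p + q), w⟫ + b w w w + ν * ⟪G w, G w⟫ = ⟪f, w⟫)
    (h₂ : PostProcessRel A τ w u) :
    ‖u‖ ^ 2 + ‖(2:ℝ) • u - p‖ ^ 2 + 2 * τ * ‖A ((2:ℝ)⁻¹ • (w + u))‖ ^ 2
        + ‖w - (2:ℝ) • p + q‖ ^ 2 + 2 * ν * Δt * ‖G w‖ ^ 2
      ≤ ‖p‖ ^ 2 + ‖(2:ℝ) • p - q‖ ^ 2 + τ / 2 * ‖A p‖ ^ 2 + 2 * ν⁻¹ * Δt * F ^ 2 := by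
  linarith [bdf2_energy_le hν hΔt hb hf h₁, h₂.energy_le hτ p]

end Scheme

theorem energy_telescope_le {E K g h d φ : ℕ → ℝ} {α β : ℝ} (M : ℕ) (hα : 0 ≤ α)
    (hK : ∀ n, 0 ≤ K n) (hhg : ∀ n, 1 ≤ n → n < M → h (n + 1) ≤ g (n + 1))
    (h_init : K 1 + β * g 1 ≤ α * h 1)
    (hstep : ∀ n, 1 ≤ n → n ≤ M →
      E (n + 1) + K (n + 1) + d n + β * g (n + 1) ≤ E n + α * h n + φ n) :
    E (M + 1) + K (M + 1) + β * g (M + 1) + ∑ n ∈ Finset.Icc 1 M, d n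
        + (β - α) * ∑ n ∈ Finset.Icc 1 (M - 1), g (n + 1)
      ≤ E 1 + α * h 1 + ∑ n ∈ Finset.Icc 1 M, φ n := by
  induction M with
  | zero =>
    simp only [zero_add, Nat.zero_sub, Finset.Icc_eq_empty_of_lt one_pos, Finset.sum_empty,
      mul_zero]
    linarith
  | succ M ih =>
    have hlast := hstep (M + 1) (by omega) le_rfl
    rw [Finset.sum_Icc_succ_top (by omega) d, Finset.sum_Icc_succ_top (by omega) φ,
      Nat.add_sub_cancel]
    rcases M with _ | M
    · simp only [zero_add, Finset.Icc_eq_empty_of_lt one_pos, Finset.sum_empty, mul_zero] at hlast ⊢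
      linarith
    · have ih := ih (fun n h₁ h₂ => hhg n h₁ (by omega)) (fun n h₁ h₂ => hstep n h₁ (by omega))
      rw [Nat.add_sub_cancel] at ih
      rw [Finset.sum_Icc_succ_top (by omega) (fun n => g (n + 1))]
      have hhg' := mul_le_mul_of_nonneg_left (hhg (M + 1) (by omega) (by omega)) hα
      linarith [hK (M + 1 + 1)]

theorem bdf2_vms_pod_stability_general
    {X Y : Type*} [NormedAddCommGroup X] [InnerProductSpace ℝ X]
    [NormedAddCommGroup Y] [InnerProductSpace ℝ Y]
    (G : X →ₗ[ℝ] Y) (P : Y →ₗ[ℝ] Y)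
    (ν νT Δt : ℝ) (hν : 0 < ν) (hνT : 0 < νT) (hΔt : 0 < Δt)
    (hP : ∀ y : Y, ‖y - P y‖ ≤ ‖y‖)
    (b : X →ₗ[ℝ] X →ₗ[ℝ] X →ₗ[ℝ] ℝ) (hb : ∀ x y : X, b x y y = 0)
    (M : ℕ) (f : ℕ → X) (F : ℕ → ℝ)
    (hf : ∀ n, 2 ≤ n → n ≤ M + 1 → ∀ v : X, |(inner ℝ (f n) v : ℝ)| ≤ F n * ‖G v‖)
    (u w : ℕ → X) (hw1 : w 1 = 0)
    (hstep1 : ∀ n, 1 ≤ n → n ≤ M → ∀ ψ : X,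
      (inner ℝ ((2 * Δt)⁻¹ • ((3:ℝ) • w (n+1) - (4:ℝ) • u n + u (n-1))) ψ : ℝ)
        + b (w (n+1)) (w (n+1)) ψ
        + ν * (inner ℝ (G (w (n+1))) (G ψ) : ℝ) = (inner ℝ (f (n+1)) ψ : ℝ))
    (hstep2 : ∀ n, 1 ≤ n → n ≤ M → ∀ ψ : X,
      (inner ℝ (Δt⁻¹ • (w (n+1) - u (n+1))) ψ : ℝ) =
        νT * (inner ℝ (G ((2:ℝ)⁻¹ • (w (n+1) + u (n+1)))
            - P (G ((2:ℝ)⁻¹ • (w (n+1) + u (n+1)))))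
          (G ψ - P (G ψ)) : ℝ)) :
    ‖u (M+1)‖ ^ 2 + ‖(2:ℝ) • u (M+1) - u M‖ ^ 2
      + 2 * νT * Δt * ‖G ((2:ℝ)⁻¹ • (w (M+1) + u (M+1)))
          - P (G ((2:ℝ)⁻¹ • (w (M+1) + u (M+1))))‖ ^ 2
      + 2 * ν * Δt * ‖G (w (M+1))‖ ^ 2
      + ∑ n ∈ Finset.Icc 1 M, ‖w (n+1) - (2:ℝ) • u n + u (n-1)‖ ^ 2
      + (4 * ν - νT) * Δt / 2 * ∑ n ∈ Finset.Icc 1 (M - 1), ‖G (w (n+1))‖ ^ 2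
      ≤ ‖u 1‖ ^ 2 + ‖(2:ℝ) • u 1 - u 0‖ ^ 2 + νT * Δt / 2 * ‖G (u 1)‖ ^ 2
        + 2 * ν⁻¹ * Δt * ∑ n ∈ Finset.Icc 1 M, F (n+1) ^ 2 := by
  set A : X →ₗ[ℝ] Y := (LinearMap.id - P) ∘ₗ G
  have hA_apply : ∀ x, A x = G x - P (G x) := fun _ => rfl
  have hAG : ∀ x, ‖A x‖ ^ 2 ≤ ‖G x‖ ^ 2 := fun x =>
    pow_le_pow_left₀ (norm_nonneg _) (hP (G x)) 2
  have hτ : 0 < Δt * νT := mul_pos hΔt hνT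
  have hpost : ∀ n, 1 ≤ n → n ≤ M → PostProcessRel A (Δt * νT) (w (n+1)) (u (n+1)) :=
    fun n h₁ h₂ => .of_fluctuation hΔt.ne' (hstep2 n h₁ h₂)
  have hinit : 2 * (Δt * νT) * ‖A ((2:ℝ)⁻¹ • (w 1 + u 1))‖ ^ 2 + 2 * ν * Δt * ‖G (w 1)‖ ^ 2
      ≤ Δt * νT / 2 * ‖A (u 1)‖ ^ 2 := by
    rw [hw1, zero_add, map_zero, norm_zero, map_smul, norm_smul, mul_pow]
    norm_num
    linarith
  have key := energy_telescope_le (E := fun n => ‖u n‖ ^ 2 + ‖(2:ℝ) • u n - u (n-1)‖ ^ 2)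
    (K := fun n => 2 * (Δt * νT) * ‖A ((2:ℝ)⁻¹ • (w n + u n))‖ ^ 2)
    (g := fun n => ‖G (w n)‖ ^ 2) (h := fun n => ‖A (u n)‖ ^ 2)
    (d := fun n => ‖w (n+1) - (2:ℝ) • u n + u (n-1)‖ ^ 2)
    (φ := fun n => 2 * ν⁻¹ * Δt * F (n+1) ^ 2) M (by positivity) (fun n => by positivity)
    (fun n h₁ h₂ => ((hpost n h₁ h₂.le).norm_sq_le hτ).trans (hAG _)) hinit
    (fun n h₁ h₂ => bdf2_postProcess_energy_le hν hΔt hτ.le (hb _ _)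
      ((le_abs_self _).trans (hf (n+1) (by omega) (by omega) _)) (hstep1 n h₁ h₂ _)
      (hpost n h₁ h₂))
  simp only [← Finset.mul_sum, Nat.sub_self, Nat.add_sub_cancel, hA_apply] at key
  have hu1 := mul_le_mul_of_nonneg_left (hAG (u 1)) (by positivity : 0 ≤ Δt * νT / 2)
  rw [hA_apply] at hu1
  have hcoef : 2 * ν * Δt - Δt * νT / 2 = (4 * ν - νT) * Δt / 2 := by ring
  rw [hcoef] at key
  linarith

/-- conditional stability of the BDF2 post-processed VMS-POD scheme,
under `‖(I − P) y‖ ≤ ‖y‖` and `ν_T < 4ν`. -/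
theorem bdf2_vms_pod_stability
    {X Y : Type*} [NormedAddCommGroup X] [InnerProductSpace ℝ X]
    [NormedAddCommGroup Y] [InnerProductSpace ℝ Y]
    (G : X →ₗ[ℝ] Y) (P : Y →ₗ[ℝ] Y)
    (ν νT Δt : ℝ) (hν : 0 < ν) (hνT : 0 < νT) (hΔt : 0 < Δt)
    (hP : ∀ y : Y, ‖y - P y‖ ≤ ‖y‖) (hννT : νT < 4 * ν)
    (b : X →ₗ[ℝ] X →ₗ[ℝ] X →ₗ[ℝ] ℝ) (hb : ∀ x y : X, b x y y = 0)
    (M : ℕ) (f : ℕ → X) (F : ℕ → ℝ)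
    (hF : ∀ n, 2 ≤ n → n ≤ M + 1 → 0 ≤ F n)
    (hf : ∀ n, 2 ≤ n → n ≤ M + 1 → ∀ v : X, |(inner ℝ (f n) v : ℝ)| ≤ F n * ‖G v‖)
    (u w : ℕ → X) (hw1 : w 1 = 0)
    (hstep1 : ∀ n, 1 ≤ n → n ≤ M → ∀ ψ : X,
      (inner ℝ ((2 * Δt)⁻¹ • ((3:ℝ) • w (n+1) - (4:ℝ) • u n + u (n-1))) ψ : ℝ)
        + b (w (n+1)) (w (n+1)) ψ
        + ν * (inner ℝ (G (w (n+1))) (G ψ) : ℝ) = (inner ℝ (f (n+1)) ψ : ℝ))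
    (hstep2 : ∀ n, 1 ≤ n → n ≤ M → ∀ ψ : X,
      (inner ℝ (Δt⁻¹ • (w (n+1) - u (n+1))) ψ : ℝ) =
        νT * (inner ℝ (G ((2:ℝ)⁻¹ • (w (n+1) + u (n+1)))
            - P (G ((2:ℝ)⁻¹ • (w (n+1) + u (n+1)))))
          (G ψ - P (G ψ)) : ℝ)) :
    ‖u (M+1)‖ ^ 2 + ‖(2:ℝ) • u (M+1) - u M‖ ^ 2
      + 2 * νT * Δt * ‖G ((2:ℝ)⁻¹ • (w (M+1) + u (M+1)))
          - P (G ((2:ℝ)⁻¹ • (w (M+1) + u (M+1))))‖ ^ 2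
      + 2 * ν * Δt * ‖G (w (M+1))‖ ^ 2
      + ∑ n ∈ Finset.Icc 1 M, ‖w (n+1) - (2:ℝ) • u n + u (n-1)‖ ^ 2
      + (4 * ν - νT) * Δt / 2 * ∑ n ∈ Finset.Icc 1 (M - 1), ‖G (w (n+1))‖ ^ 2
      ≤ ‖u 1‖ ^ 2 + ‖(2:ℝ) • u 1 - u 0‖ ^ 2 + νT * Δt / 2 * ‖G (u 1)‖ ^ 2
        + 2 * ν⁻¹ * Δt * ∑ n ∈ Finset.Icc 1 M, F (n+1) ^ 2 :=
  bdf2_vms_pod_stability_general G P ν νT Δt hν hνT hΔt hP b hb M f F hf u w hw1 hstep1 hstep2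
end
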